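/- arXiv:2101.04204 — 4 statements merged into one kernel-verified Lean document; each statement's English description precedes it below -/
import Mathlib

section
/- Clamping at 4 preserves prediction: with c' v = min(c v, 4) on non-frozen cells, for every cell v and t ≥ 1, F^t(c) v ≥ 4 holds iff F^t(c') v ≥ 4; consequently, there exists t with F^t(c) v ≥ 4 iff there exists t with F^t(c') v ≥ 4. -/
def neighbors (v : ℤ × ℤ) : List (ℤ × ℤ) :=
  [(v.1, v.2 + 1), (v.1 + 1, v.2), (v.1, v.2 - 1), (v.1 - 1, v.2)]

def firedB (c : (ℤ × ℤ) → Option ℕ) (u : ℤ × ℤ) : Bool :=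
  (c u).any (fun m => decide (4 ≤ m))

def F (c : (ℤ × ℤ) → Option ℕ) : (ℤ × ℤ) → Option ℕ := fun v =>
  match c v with
  | none => none
  | some k => if 4 ≤ k then none else some (k + (neighbors v).countP (firedB c))

theorem clamp_preserves_prediction (c c' : (ℤ × ℤ) → Option ℕ)
    (hc' : ∀ v, c' v = (c v).map (fun k => min k 4)) :
    (∀ (v : ℤ × ℤ) (t : ℕ), 1 ≤ t →
      ((∃ k, 4 ≤ k ∧ F^[t] c v = some k) ↔ (∃ k, 4 ≤ k ∧ F^[t] c' v = some k))) ∧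
    (∀ v : ℤ × ℤ,
      (∃ t k, 4 ≤ k ∧ F^[t] c v = some k) ↔ (∃ t k, 4 ≤ k ∧ F^[t] c' v = some k)) := by
  have hfired : firedB c' = firedB c := by
    funext u
    simp only [firedB, hc' u]
    cases c u with
    | none => rfl
    | some m =>
      simp only [Option.map_some, Option.any_some]
      have : 4 ≤ min m 4 ↔ 4 ≤ m := by omega
      simp [this]
  have hF : F c' = F c := by
    funext v
    simp only [F, hc' v]
    cases c v with
    | none => rfl
    | some k =>
      simp only [Option.map_some]
      by_cases h : 4 ≤ k
      · have h4 : min k 4 = 4 := by omega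
        simp [h4, h]
      · have h4 : min k 4 = k := by omega
        simp [h4, h, hfired]
  have hiter : ∀ t, 1 ≤ t → F^[t] c' = F^[t] c := by
    intro t ht
    obtain ⟨s, rfl⟩ := Nat.exists_eq_add_of_le ht
    rw [add_comm, Function.iterate_succ_apply, Function.iterate_succ_apply, hF]
  constructor
  · intro v t ht
    rw [hiter t ht]
  · intro v
    constructor
    · rintro ⟨t, k, hk, he⟩
      rcases Nat.eq_zero_or_pos t with rfl | ht
      · refine ⟨0, 4, le_refl 4, ?_⟩
        simp only [Function.iterate_zero_apply] at he ⊢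
        rw [hc' v, he]
        simp [Nat.min_eq_right hk]
      · exact ⟨t, k, hk, by rwa [hiter t ht]⟩
    · rintro ⟨t, k, hk, he⟩
      rcases Nat.eq_zero_or_pos t with rfl | ht
      · simp only [Function.iterate_zero_apply] at he
        rw [hc' v] at he
        cases hcv : c v with
        | none => rw [hcv] at he; simp at he
        | some m =>
          rw [hcv] at he
          simp only [Option.map_some, Option.some.injEq] at he
          exact ⟨0, m, by omega, by simpa using hcv⟩
      · exact ⟨t, k, hk, by rwa [← hiter t ht]⟩
end

section
/- A finite freezing sandpile configuration stabilizes in at most nm+1 steps: if c is a finite simple configuration supported on an n×m rectangle (all cells outside frozen, values in {0,1,2,3,4} inside), then F^{nm+1}(c) is stable, i.e., F^{nm+1}(c) v < 4 or frozen for every cell v, and F^{nm+2}(c) = F^{nm+1}(c). -/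
/-! Every non-stable step freezes at least one cell and no cell ever thaws, so the number of
unfrozen cells of the rectangle strictly decreases until the configuration is stable; it starts
at most at `n * m`, and a stable configuration is a fixed point of `F`. -/

theorem Function.iterate_of_decreasing_measure {α : Type*} {f : α → α} {P Q : α → Prop}
    (μ : α → ℕ) (hQ : ∀ x, Q x → Q (f x)) (hμ : ∀ x, Q x → ¬P x → μ (f x) < μ x)
    (hfix : ∀ x, P x → f x = x) {x : α} (hx : Q x) {N : ℕ} (hN : μ x ≤ N) :
    P (f^[N] x) := by
  induction N generalizing x with
  | zero =>
    by_contra hPx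
    have := hμ x hx hPx
    omega
  | succ N ih =>
    by_cases hPx : P x
    · rwa [Function.iterate_fixed (hfix x hPx)]
    · rw [Function.iterate_succ_apply]
      exact ih (hQ x hx) (by have := hμ x hx hPx; omega)

def IsStable (c : (ℤ × ℤ) → Option ℕ) : Prop := ∀ v k, c v = some k → k < 4

def FrozenOutside (S : Finset (ℤ × ℤ)) (c : (ℤ × ℤ) → Option ℕ) : Prop := ∀ v ∉ S, c v = none

noncomputable def liveCells (S : Finset (ℤ × ℤ)) (c : (ℤ × ℤ) → Option ℕ) : Finset (ℤ × ℤ) :=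
  S.filter fun v => (c v).isSome

section

variable {c : (ℤ × ℤ) → Option ℕ} {S : Finset (ℤ × ℤ)}

lemma F_eq_none_of_eq_none {v : ℤ × ℤ} (h : c v = none) : F c v = none := by
  simp [F, h]

lemma F_eq_none_of_four_le {v : ℤ × ℤ} {k : ℕ} (h : c v = some k) (hk : 4 ≤ k) :
    F c v = none := by
  simp [F, h, hk]

lemma firedB_eq_false_of_isStable (h : IsStable c) (u : ℤ × ℤ) : firedB c u = false := by
  cases hc : c u with
  | none => simp [firedB, hc]
  | some k => simp [firedB, hc, h u k hc]

lemma F_eq_self_of_isStable (h : IsStable c) : F c = c := by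
  funext v
  cases hc : c v with
  | none => exact F_eq_none_of_eq_none hc
  | some k =>
    have hcount : (neighbors v).countP (firedB c) = 0 :=
      List.countP_eq_zero.mpr fun u _ => by simp [firedB_eq_false_of_isStable h u]
    simp [F, hc, h v k hc, hcount]

lemma frozenOutside_F (h : FrozenOutside S c) : FrozenOutside S (F c) :=
  fun v hv => F_eq_none_of_eq_none (h v hv)

lemma liveCells_F_subset : liveCells S (F c) ⊆ liveCells S c := by
  intro v hv
  simp only [liveCells, Finset.mem_filter, Option.isSome_iff_ne_none] at hv ⊢
  exact ⟨hv.1, fun hc => hv.2 (F_eq_none_of_eq_none hc)⟩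

lemma card_liveCells_F_lt (hS : FrozenOutside S c) (h : ¬IsStable c) :
    (liveCells S (F c)).card < (liveCells S c).card := by
  simp only [IsStable, not_forall, not_lt] at h
  obtain ⟨v, k, hvk, hk⟩ := h
  have hvS : v ∈ S := by
    by_contra hv
    simp [hS v hv] at hvk
  refine Finset.card_lt_card ((Finset.ssubset_iff_of_subset liveCells_F_subset).mpr ⟨v, ?_, ?_⟩)
  · simp [liveCells, hvS, hvk]
  · simp [liveCells, F_eq_none_of_four_le hvk hk]

end

theorem stabilizes_general (n m : ℕ) (c : (ℤ × ℤ) → Option ℕ)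
    (hout : ∀ v : ℤ × ℤ, (v.1 < 0 ∨ (n : ℤ) ≤ v.1 ∨ v.2 < 0 ∨ (m : ℤ) ≤ v.2) → c v = none) :
    (∀ (v : ℤ × ℤ) (k : ℕ), F^[n * m + 1] c v = some k → k < 4) ∧
    F^[n * m + 2] c = F^[n * m + 1] c := by
  set S : Finset (ℤ × ℤ) := Finset.Ico 0 (n : ℤ) ×ˢ Finset.Ico 0 (m : ℤ)
  have hS : FrozenOutside S c := by
    intro v hv
    apply hout
    simp only [S, Finset.mem_product, Finset.mem_Ico, not_and_or, not_le, not_lt] at hv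
    tauto
  have hcard : (liveCells S c).card ≤ n * m + 1 := by
    have := Finset.card_le_card (Finset.filter_subset (fun v => (c v).isSome) S)
    simp only [S, Finset.card_product, Int.card_Ico, sub_zero, Int.toNat_natCast] at this
    exact this.trans (Nat.le_succ _)
  have hstable : IsStable (F^[n * m + 1] c) :=
    Function.iterate_of_decreasing_measure (fun c => (liveCells S c).card)
      (fun _ => frozenOutside_F) (fun _ => card_liveCells_F_lt) (fun _ => F_eq_self_of_isStable)
      hS hcard
  exact ⟨hstable, by rw [Function.iterate_succ_apply', F_eq_self_of_isStable hstable]⟩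

theorem stabilizes (n m : ℕ) (c : (ℤ × ℤ) → Option ℕ)
    (hout : ∀ v : ℤ × ℤ, (v.1 < 0 ∨ (n : ℤ) ≤ v.1 ∨ v.2 < 0 ∨ (m : ℤ) ≤ v.2) → c v = none)
    (hin : ∀ v : ℤ × ℤ, (0 ≤ v.1 ∧ v.1 < (n : ℤ) ∧ 0 ≤ v.2 ∧ v.2 < (m : ℤ)) →
      ∃ k, k ≤ 4 ∧ c v = some k) :
    (∀ (v : ℤ × ℤ) (k : ℕ), F^[n * m + 1] c v = some k → k < 4) ∧
    F^[n * m + 2] c = F^[n * m + 1] c :=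
  stabilizes_general n m c hout
end

section
/- Commutation with Boolean threshold networks (Proposition 1): for a finite simple sandpile configuration c of size n×m, let B_c be the Boolean network on the n×m grid graph where vertex v gets local function AND if c v = 0, strict majority (threshold 3 of 4) if c v = 1, non-strict majority (threshold 2) if c v = 2, OR (threshold 1) if c v = 3, and constant 1 if c v = 4, each function freezing (state 1 maps to 1). Let φ(c) v = 1 iff c v is frozen (= -∞), else 0. Then for all t ∈ ℕ, B_c^t(φ(c)) = φ(F^t(c)) on the n×m rectangle. -/
abbrev inRect (n m : ℕ) (v : ℤ × ℤ) : Prop :=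
  0 ≤ v.1 ∧ v.1 < (n : ℤ) ∧ 0 ≤ v.2 ∧ v.2 < (m : ℤ)

def Bgrid (n m : ℕ) (θ : ℤ × ℤ → ℕ) (x : ℤ × ℤ → Bool) : ℤ × ℤ → Bool := fun v =>
  x v || decide (θ v ≤ (neighbors v).countP (fun u => decide (inRect n m u) && x u))

def phi (c : (ℤ × ℤ) → Option ℕ) (v : ℤ × ℤ) : Bool := (c v).isNone

/-- The Boolean network associated to a simple configuration `c`: the threshold
of vertex `v` is `4 - c v` (constant 1 when `c v = 4`). -/
def Bc (n m : ℕ) (c : (ℤ × ℤ) → Option ℕ) (x : ℤ × ℤ → Bool) : ℤ × ℤ → Bool := fun v =>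
  x v || decide (4 - (c v).getD 0 ≤ (neighbors v).countP (fun u => decide (inRect n m u) && x u))

lemma countP_split {α : Type*} (l : List α) (p p' q : α → Bool)
    (h : ∀ a ∈ l, (if p' a then 1 else 0 : ℕ) = (if p a then 1 else 0) + (if q a then 1 else 0)) :
    l.countP p' = l.countP p + l.countP q := by
  induction l with
  | nil => simp
  | cons a l ih =>
    simp only [List.countP_cons]
    have h1 := h a (by simp)
    have h2 := ih (fun a ha => h a (by simp [ha]))
    omega

lemma countP_congr' {α : Type*} (l : List α) (p q : α → Bool)
    (h : ∀ a ∈ l, p a = q a) : l.countP p = l.countP q := by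
  induction l with
  | nil => simp
  | cons a l ih =>
    simp only [List.countP_cons, h a (by simp), ih (fun a ha => h a (by simp [ha]))]

theorem boolean_commutation (n m : ℕ) (c : (ℤ × ℤ) → Option ℕ)
    (hout : ∀ v : ℤ × ℤ, ¬ inRect n m v → c v = none)
    (hin : ∀ v : ℤ × ℤ, inRect n m v → ∃ k, k ≤ 4 ∧ c v = some k) :
    ∀ (t : ℕ) (v : ℤ × ℤ), inRect n m v →
      (Bc n m c)^[t] (phi c) v = phi (F^[t] c) v := by
  suffices H : ∀ t : ℕ,
      (∀ v, ¬ inRect n m v → F^[t] c v = none) ∧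
      (∀ v, inRect n m v → F^[t] c v = none ∨
        F^[t] c v = some ((c v).getD 0 +
          (neighbors v).countP (fun u => decide (inRect n m u) && (F^[t] c u).isNone))) ∧
      (∀ v, inRect n m v → (Bc n m c)^[t] (phi c) v = phi (F^[t] c) v) by
    intro t v hv
    exact (H t).2.2 v hv
  intro t
  induction t with
  | zero =>
    refine ⟨fun v hv => hout v hv, fun v hv => ?_, fun v _ => rfl⟩
    obtain ⟨k, hk4, hk⟩ := hin v hv
    right
    simp only [Function.iterate_zero, id_eq]
    have hz : (neighbors v).countP (fun u => decide (inRect n m u) && (c u).isNone) = 0 := by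
      rw [List.countP_eq_zero]
      intro u hu
      by_cases h : inRect n m u
      · obtain ⟨k', _, hk'⟩ := hin u h
        simp [hk']
      · simp [h]
    rw [hz, hk]
    rfl
  | succ t ih =>
    obtain ⟨ih1, ih2, ih3⟩ := ih
    -- the key pointwise firing relation
    have hstep : ∀ u : ℤ × ℤ,
        (if (decide (inRect n m u) && (F (F^[t] c) u).isNone) then 1 else 0 : ℕ) =
        (if (decide (inRect n m u) && (F^[t] c u).isNone) then 1 else 0) +
        (if firedB (F^[t] c) u then 1 else 0) := by
      intro u
      by_cases h : inRect n m u
      · rcases ih2 u h with h0 | hk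
        · simp [F, h0, firedB, h]
        · by_cases h4 : 4 ≤ (c u).getD 0 +
              (neighbors u).countP (fun w => decide (inRect n m w) && (F^[t] c w).isNone)
          · simp [F, hk, firedB, h, h4]
          · simp [F, hk, firedB, h, h4]
      · have h0 := ih1 u h
        simp [F, h0, firedB, h]
    have hcount : ∀ v : ℤ × ℤ,
        (neighbors v).countP (fun u => decide (inRect n m u) && (F (F^[t] c) u).isNone) =
        (neighbors v).countP (fun u => decide (inRect n m u) && (F^[t] c u).isNone) +
        (neighbors v).countP (firedB (F^[t] c)) :=
      fun v => countP_split _ _ _ _ (fun u _ => hstep u)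
    refine ⟨fun v hv => ?_, fun v hv => ?_, fun v hv => ?_⟩
    · rw [Function.iterate_succ_apply']
      have h0 := ih1 v hv
      simp [F, h0]
    · simp only [Function.iterate_succ_apply']
      rcases ih2 v hv with h0 | hk
      · left; simp [F, h0]
      · by_cases h4 : 4 ≤ (c v).getD 0 +
            (neighbors v).countP (fun u => decide (inRect n m u) && (F^[t] c u).isNone)
        · left
          simp only [F, hk, if_pos h4]
        · right
          rw [hcount v]
          have : F (F^[t] c) v = some (((c v).getD 0 +
              (neighbors v).countP (fun u => decide (inRect n m u) && (F^[t] c u).isNone)) +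
              (neighbors v).countP (firedB (F^[t] c))) := by
            simp only [F, hk, if_neg h4]
          rw [this]
          congr 1
          ring
    · simp only [Function.iterate_succ_apply']
      obtain ⟨k, hk4, hkc⟩ := hin v hv
      have hg : (c v).getD 0 = k := by rw [hkc]; rfl
      have hx : (neighbors v).countP (fun u => decide (inRect n m u) && (Bc n m c)^[t] (phi c) u)
          = (neighbors v).countP (fun u => decide (inRect n m u) && (F^[t] c u).isNone) := by
        refine countP_congr' _ _ _ (fun u _ => ?_)
        by_cases h : inRect n m u
        · simp [h, ih3 u h, phi]
        · simp [h]
      show ((Bc n m c)^[t] (phi c) v ||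
          decide (4 - (c v).getD 0 ≤ (neighbors v).countP
            (fun u => decide (inRect n m u) && (Bc n m c)^[t] (phi c) u))) = _
      rw [ih3 v hv, hx, hg]
      rcases ih2 v hv with h0 | hk
      · simp [phi, F, h0]
      · have hN := hk
        rw [hg] at hN
        by_cases h4 : 4 ≤ k +
            (neighbors v).countP (fun u => decide (inRect n m u) && (F^[t] c u).isNone)
        · have : F (F^[t] c) v = none := by simp only [F, hN, if_pos h4]
          simp only [phi, this, hN, Option.isNone_none, Option.isNone_some, Bool.false_or]
          simp only [decide_eq_true_eq]
          omega
        · have : F (F^[t] c) v = some (k +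
              (neighbors v).countP (fun u => decide (inRect n m u) && (F^[t] c u).isNone) +
              (neighbors v).countP (firedB (F^[t] c))) := by simp only [F, hN, if_neg h4]
          simp only [phi, this, hN, Option.isNone_some, Bool.false_or]
          simp only [decide_eq_false_iff_not]
          omega
end

section
/- Degree-3 gadget for 0-cells never fires: in a freezing Boolean network, a 4-cycle of vertices u_n, u_e, u_s, u_w each with threshold 3 (strict majority), each having exactly one additional neighbor outside the cycle, and all four initially in state 0, remains all-0 forever regardless of the states of the outside neighbors. -/
def Bgraph {V : Type*} [Fintype V] [DecidableEq V] (G : SimpleGraph V) [DecidableRel G.Adj]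
    (θ : V → ℕ) (x : V → Bool) : V → Bool := fun v =>
  x v || decide (θ v ≤ (Finset.univ.filter fun u => G.Adj v u ∧ x u = true).card)

lemma step_false {V : Type*} [Fintype V] [DecidableEq V] (G : SimpleGraph V)
    [DecidableRel G.Adj] (v p q : V) (hpq : p ≠ q) (hvp : G.Adj v p) (hvq : G.Adj v q)
    (hdeg : G.degree v = 3) (x : V → Bool) (hv : x v = false) (hp : x p = false)
    (hq : x q = false) : Bgraph G (fun _ => 3) x v = false := by
  have hsub : (Finset.univ.filter fun u => G.Adj v u ∧ x u = true) ⊆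
      ((G.neighborFinset v).erase p).erase q := by
    intro u hu
    simp only [Finset.mem_filter] at hu
    rcases hu with ⟨-, hadj, hx⟩
    refine Finset.mem_erase.2 ⟨?_, Finset.mem_erase.2 ⟨?_, ?_⟩⟩
    · rintro rfl; rw [hq] at hx; exact Bool.false_ne_true hx
    · rintro rfl; rw [hp] at hx; exact Bool.false_ne_true hx
    · exact (SimpleGraph.mem_neighborFinset _ _ _).2 hadj
  have hcard : (Finset.univ.filter fun u => G.Adj v u ∧ x u = true).card ≤ 1 := by
    have := Finset.card_le_card hsub
    have h2 : (((G.neighborFinset v).erase p).erase q).card = 1 := by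
      rw [Finset.card_erase_of_mem, Finset.card_erase_of_mem]
      · rw [SimpleGraph.card_neighborFinset_eq_degree, hdeg]
      · exact (SimpleGraph.mem_neighborFinset _ _ _).2 hvp
      · exact Finset.mem_erase.2 ⟨hpq.symm, (SimpleGraph.mem_neighborFinset _ _ _).2 hvq⟩
    omega
  simp [Bgraph, hv]
  omega

theorem degree_three_gadget_never_fires {V : Type*} [Fintype V] [DecidableEq V]
    (G : SimpleGraph V) [DecidableRel G.Adj] (a b c d : V)
    (hab : G.Adj a b) (hbc : G.Adj b c) (hcd : G.Adj c d) (hda : G.Adj d a)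
    (hac : ¬ G.Adj a c) (hbd : ¬ G.Adj b d)
    (hane : a ≠ c) (hbne : b ≠ d)
    (hdega : G.degree a = 3) (hdegb : G.degree b = 3)
    (hdegc : G.degree c = 3) (hdegd : G.degree d = 3)
    (x : V → Bool) (hxa : x a = false) (hxb : x b = false)
    (hxc : x c = false) (hxd : x d = false) :
    ∀ t : ℕ, (Bgraph G (fun _ => 3))^[t] x a = false ∧
      (Bgraph G (fun _ => 3))^[t] x b = false ∧
      (Bgraph G (fun _ => 3))^[t] x c = false ∧
      (Bgraph G (fun _ => 3))^[t] x d = false := by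
  intro t
  induction t with
  | zero => exact ⟨hxa, hxb, hxc, hxd⟩
  | succ n ih =>
    obtain ⟨ha, hb, hc, hd⟩ := ih
    rw [Function.iterate_succ_apply']
    set y := (Bgraph G (fun _ => 3))^[n] x
    exact ⟨step_false G a b d hbne hab hda.symm hdega y ha hb hd,
      step_false G b a c hane hab.symm hbc hdegb y hb ha hc,
      step_false G c b d hbne hbc.symm hcd hdegc y hc hb hd,
      step_false G d a c hane hda hcd.symm hdegd y hd ha hc⟩
end
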